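/- Let α > 1, σ > 0, k > 0, c := σ/(αk), f(R) := √(1 + 4c/R + c²/R²) and θ₊(R) := (2 + c/R + f(R))/(3α). Then the plastic energy term E^{pl}_R(θ₊(R)) := σR²(1 − θ₊(R)²) satisfies E^{pl}_R(θ₊(R)) = σR²(1 − α⁻²) − (2σ²/(α³k))·R + o(R) as R → +∞; equivalently, lim_{R→∞} ( σR²(1 − θ₊(R)²) − σR²(1 − α⁻²) )/R = −2σ²/(α³k). -/

import Mathlib

/-!
Dividing the difference of the two plastic energies by `R` leaves `σ · R(α⁻¹ - θ₊) · (α⁻¹ + θ₊)`.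
Here `θ₊ → α⁻¹`, and `R(α⁻¹ - θ₊) = -(c + R(f - 1))/(3α)` where
`R(f - 1) = R(f² - 1)/(f + 1) → 4c/2`, so `R(α⁻¹ - θ₊) → -c/α` and the quotient tends to
`-2σc/α² = -2σ²/(α³k)`.
-/

open Filter

noncomputable section

/-- The discriminant factor `f(R) = √(1 + 4c/R + c²/R²)`. -/
def fdisc (c R : ℝ) : ℝ := Real.sqrt (1 + 4*c/R + c^2/R^2)

/-- The critical point `θ₊(R) = (2 + c/R + f(R))/(3α)`. -/
def θplus (α c R : ℝ) : ℝ := (2 + c/R + fdisc c R) / (3*α)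

/-- The critical point `θ₋(R) = (2 + c/R − f(R))/(3α)`. -/
def θminus (α c R : ℝ) : ℝ := (2 + c/R - fdisc c R) / (3*α)

/-- The total energy polynomial `P_{k,R}(θ) = kR³θ(αθ−1)² + σR²(1−θ²)`. -/
def Ptot (α σ k R θ : ℝ) : ℝ := k*R^3*θ*(α*θ - 1)^2 + σ*R^2*(1 - θ^2)

open Topology

theorem Filter.Tendsto.mul_sqrt_sub_one {ι : Type*} {l : Filter ι} {g r : ι → ℝ} {L : ℝ}
    (hg : Tendsto g l (𝓝 1)) (hrg : Tendsto (fun x => r x * (g x - 1)) l (𝓝 L)) :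
    Tendsto (fun x => r x * (Real.sqrt (g x) - 1)) l (𝓝 (L / 2)) := by
  have hsqrt : Tendsto (fun x => Real.sqrt (g x) + 1) l (𝓝 2) := by
    simpa [one_add_one_eq_two] using hg.sqrt.add_const 1
  refine (hrg.div hsqrt two_ne_zero).congr' ?_
  filter_upwards [hg.eventually (lt_mem_nhds zero_lt_one)] with x hx
  have hpos : 0 < Real.sqrt (g x) + 1 := by positivity
  rw [Pi.div_apply, div_eq_iff hpos.ne']
  linear_combination (-r x) * Real.sq_sqrt hx.le

theorem tendsto_fdisc_radicand_atTop (c : ℝ) :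
    Tendsto (fun R : ℝ => 1 + 4 * c / R + c ^ 2 / R ^ 2) atTop (𝓝 1) := by
  have h4c := tendsto_const_nhds (x := 4 * c).div_atTop tendsto_id
  have hc2 := tendsto_const_nhds (x := c ^ 2).div_atTop (tendsto_pow_atTop two_ne_zero)
  simpa using (h4c.const_add 1).add hc2

theorem tendsto_fdisc_atTop (c : ℝ) : Tendsto (fdisc c) atTop (𝓝 1) := by
  have h := (tendsto_fdisc_radicand_atTop c).sqrt
  rwa [Real.sqrt_one] at h

theorem tendsto_mul_fdisc_sub_one_atTop (c : ℝ) :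
    Tendsto (fun R => R * (fdisc c R - 1)) atTop (𝓝 (2 * c)) := by
  have hlin : Tendsto (fun R : ℝ => R * (1 + 4 * c / R + c ^ 2 / R ^ 2 - 1)) atTop (𝓝 (4 * c)) := by
    have hquot : Tendsto (fun R : ℝ => 4 * c + c ^ 2 / R) atTop (𝓝 (4 * c)) := by
      simpa using (tendsto_const_nhds (x := c ^ 2).div_atTop tendsto_id).const_add (4 * c)
    refine hquot.congr' ?_
    filter_upwards [eventually_ne_atTop 0] with R hR
    field_simp
    ring
  have h := (tendsto_fdisc_radicand_atTop c).mul_sqrt_sub_one hlin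
  rwa [show 4 * c / 2 = 2 * c by ring] at h

theorem tendsto_θplus_atTop (α c : ℝ) : Tendsto (θplus α c) atTop (𝓝 α⁻¹) := by
  have hc := tendsto_const_nhds (x := c).div_atTop tendsto_id
  have h := ((hc.const_add 2).add (tendsto_fdisc_atTop c)).div_const (3 * α)
  rw [show (2 + 0 + 1 : ℝ) / (3 * α) = α⁻¹ by norm_num [div_mul_cancel_left₀]] at h
  exact h

theorem tendsto_mul_inv_sub_θplus_atTop (α c : ℝ) :
    Tendsto (fun R => R * (α⁻¹ - θplus α c R)) atTop (𝓝 (-c / α)) := by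
  have h := (((tendsto_mul_fdisc_sub_one_atTop c).const_add c).neg).div_const (3 * α)
  rw [show -(c + 2 * c) / (3 * α) = -c / α by ring] at h
  refine h.congr' ?_
  filter_upwards [eventually_ne_atTop 0] with R hR
  rw [θplus]
  field_simp
  ring

theorem plastic_part_expansion_general (α σ k : ℝ) :
    Tendsto (fun R : ℝ =>
        (σ * R^2 * (1 - θplus α (σ/(α*k)) R ^ 2) - σ * R^2 * (1 - (α^2)⁻¹)) / R)
      atTop (nhds (-2 * σ^2 / (α^3 * k))) := by
  have h := ((tendsto_mul_inv_sub_θplus_atTop α (σ / (α * k))).const_mul σ).mul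
    ((tendsto_θplus_atTop α (σ / (α * k))).const_add α⁻¹)
  rw [show σ * (-(σ / (α * k)) / α) * (α⁻¹ + α⁻¹) = -2 * σ ^ 2 / (α ^ 3 * k) by ring] at h
  refine h.congr' ?_
  filter_upwards [eventually_ne_atTop 0] with R hR
  field_simp
  ring

/-- the plastic energy at the minimizer satisfies
`E^{pl}_R(θ₊(R)) = σR²(1 − α⁻²) − (2σ²/(α³k))R + o(R)` as `R → +∞`. -/
theorem plastic_part_expansion (α σ k : ℝ) (hα : 1 < α) (hσ : 0 < σ) (hk : 0 < k) :
    Tendsto (fun R : ℝ =>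
        (σ * R^2 * (1 - θplus α (σ/(α*k)) R ^ 2) - σ * R^2 * (1 - (α^2)⁻¹)) / R)
      atTop (nhds (-2 * σ^2 / (α^3 * k))) :=
  plastic_part_expansion_general α σ k
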